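/- arXiv:cs/0405100 — 2 statements merged into one kernel-verified Lean document; each statement's English description precedes it below -/
import Mathlib

section
/- The rewriting system consisting of the rules (Decomp), (Triv), (VarLeft), (VarRight) for simplifying subtype inequality systems terminates in at most n steps, where n is the sum of the sizes of the left-hand sides of the inequalities, because each rule strictly decreases that sum. -/
structure Sig (K : Type) where
  ar : K → ℕ
  le : K → K → Prop
  le_refl : ∀ k, le k k
  le_trans : ∀ {a b c}, le a b → le b c → le a c
  le_antisymm : ∀ {a b}, le a b → le b a → a = b
  ar_anti : ∀ {a b}, le a b → ar b ≤ ar a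
  iota : K → K → ℕ → ℕ
  iota_lt : ∀ {a b}, le a b → ∀ {i}, i < ar b → iota a b i < ar a
  iota_inj : ∀ {a b}, le a b → ∀ {i j}, i < ar b → j < ar b → iota a b i = iota a b j → i = j
  iota_id : ∀ k i, iota k k i = i
  iota_comp : ∀ {a b c}, le a b → le b c → ∀ {i}, i < ar c → iota a c i = iota a b (iota b c i)

/-- Types: first-order terms over constructors `K` and parameters (type variables) `ℕ`. -/
inductive Ty (K : Type) : Type
  | param : ℕ → Ty K
  | con : K → List (Ty K) → Ty K

/-- The structural covariant subtyping order. -/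
inductive SubTy {K : Type} (S : Sig K) : Ty K → Ty K → Prop
  | param (n : ℕ) : SubTy S (.param n) (.param n)
  | con {k k' : K} {as as' : List (Ty K)} :
      S.le k k' → as.length = S.ar k → as'.length = S.ar k' →
      (∀ i, i < S.ar k' → SubTy S (as.getD (S.iota k k' i) (.param 0)) (as'.getD i (.param 0))) →
      SubTy S (.con k as) (.con k' as')

/-- Application of a type substitution. -/
def Ty.subst {K : Type} (θ : ℕ → Ty K) : Ty K → Ty K
  | .param n => θ n
  | .con k as => .con k (as.attach.map (fun a => a.1.subst θ))
decreasing_by simp_wf; have := List.sizeOf_lt_of_mem a.2; omega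

/-- Number of occurrences of constructors and parameters. -/
def Ty.size {K : Type} : Ty K → ℕ
  | .param _ => 1
  | .con _ as => 1 + (as.attach.map (fun a => a.1.size)).sum
decreasing_by simp_wf; have := List.sizeOf_lt_of_mem a.2; omega

/-- The parameter α occurs in a type. -/
inductive Occurs {K : Type} (α : ℕ) : Ty K → Prop
  | param : Occurs α (.param α)
  | con {k : K} {as : List (Ty K)} {t : Ty K} : t ∈ as → Occurs α t → Occurs α (.con k as)

/-- `m` is the maximum of the set of supertypes of `t`. -/
def IsMaxTy {K : Type} (S : Sig K) (t m : Ty K) : Prop :=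
  SubTy S t m ∧ ∀ s, SubTy S t s → SubTy S s m

/-- Substitution of a single parameter: `t[σ/α]`. -/
def Ty.subst1 {K : Type} (α : ℕ) (σ : Ty K) (t : Ty K) : Ty K :=
  t.subst (fun n => if n = α then σ else .param n)

/-- An item of a system: a subtype inequality `τ ≤ τ'` or an equation `α = τ`. -/
inductive Item (K : Type) : Type
  | ineq : Ty K → Ty K → Item K
  | eq : ℕ → Ty K → Item K

variable {K : Type}

/-- Substituting `σ` for the parameter `α` throughout an item. -/
def Item.substI (α : ℕ) (σ : Ty K) : Item K → Item K
  | .ineq l r => .ineq (Ty.subst1 α σ l) (Ty.subst1 α σ r)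
  | .eq β τ => .eq β (Ty.subst1 α σ τ)

/-- `α` occurs in the left-hand side of an inequality item. -/
def Item.occLeft (α : ℕ) : Item K → Prop
  | .ineq l _ => Occurs α l
  | .eq _ _ => False

/-- The simplification rules (Decomp), (Triv), (VarLeft), (VarRight) on systems
(finite multisets, represented as lists) of inequalities and equations. -/
inductive StepS (S : Sig K) : List (Item K) → List (Item K) → Prop
  | decomp {E1 E2 : List (Item K)} {k k' : K} {as as' : List (Ty K)} :
      S.le k k' → as.length = S.ar k → as'.length = S.ar k' →
      StepS S (E1 ++ [.ineq (.con k as) (.con k' as')] ++ E2)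
        (E1 ++ ((List.range (S.ar k')).map
            (fun i => Item.ineq (as.getD (S.iota k k' i) (.param 0))
              (as'.getD i (.param 0)))) ++ E2)
  | triv {E1 E2 : List (Item K)} {α : ℕ} :
      StepS S (E1 ++ [.ineq (.param α) (.param α)] ++ E2) (E1 ++ E2)
  | varLeft {E1 E2 : List (Item K)} {α : ℕ} {τ : Ty K} :
      τ ≠ .param α → ¬ Occurs α τ →
      (∀ it ∈ E1 ++ E2, ¬ it.occLeft α) →
      StepS S (E1 ++ [.ineq (.param α) τ] ++ E2)
        (.eq α τ :: (E1 ++ E2).map (Item.substI α τ))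
  | varRight {E1 E2 : List (Item K)} {α : ℕ} {τ m : Ty K} :
      (∀ n, τ ≠ .param n) →
      (∀ it ∈ E1 ++ E2, ¬ it.occLeft α) →
      IsMaxTy S τ m → ¬ Occurs α m →
      StepS S (E1 ++ [.ineq τ (.param α)] ++ E2)
        (.eq α m :: (E1 ++ E2).map (Item.substI α m))

/-- The sum of the sizes of the left-hand sides of the inequalities of a system. -/
def measureS (E : List (Item K)) : ℕ :=
  (E.map (fun it => match it with | .ineq l _ => l.size | .eq _ _ => 0)).sum

/-!
Every rule removes one inequality and adds inequalities whose left-hand sides are together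
smaller. (Decomp) replaces the left-hand side `K(τ₁,…,τₘ)` by the distinct arguments
`τ_{ι(1)},…,τ_{ι(n)}`, which lose at least the head symbol; (Triv) removes a left-hand side of
size one; (VarLeft) and (VarRight) remove an inequality and substitute for a parameter that,
by their side conditions, occurs in no remaining left-hand side, so the other left-hand sides are
unchanged and the new equation does not count. A strictly decreasing natural number bounds the
number of steps.
-/

lemma chain_length_le_of_measure_lt {α : Type*} (r : α → α → Prop) (μ : α → ℕ)
    (hr : ∀ ⦃a b⦄, r a b → μ b < μ a) (seq : ℕ → α) (n : ℕ)
    (hseq : ∀ i < n, r (seq i) (seq (i + 1))) : n ≤ μ (seq 0) := by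
  suffices ∀ m ≤ n, μ (seq m) + m ≤ μ (seq 0) by have := this n le_rfl; omega
  intro m hm
  induction m with
  | zero => simp
  | succ m ih =>
    have := hr (hseq m hm)
    have := ih (by omega)
    omega

lemma List.sum_map_getD_comp_le {α : Type*} (l : List α) (d : α) (f : α → ℕ) (n : ℕ)
    (ι : ℕ → ℕ) (hlt : ∀ i < n, ι i < l.length) (hinj : Set.InjOn ι (Set.Iio n)) :
    ((List.range n).map fun i => f (l.getD (ι i) d)).sum ≤ (l.map f).sum := by
  have range_sum (m : ℕ) (g : ℕ → ℕ) :
      ((List.range m).map g).sum = ∑ i ∈ Finset.range m, g i := by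
    rw [Finset.sum_eq_multiset_sum, Finset.range_val, Multiset.range, Multiset.map_coe,
      Multiset.sum_coe]
  have hsub : (Finset.range n).image ι ⊆ Finset.range l.length := by
    simpa [Finset.image_subset_iff] using hlt
  calc ((List.range n).map fun i => f (l.getD (ι i) d)).sum
      = ∑ j ∈ (Finset.range n).image ι, f (l.getD j d) := by
        rw [range_sum, Finset.sum_image]
        simpa using hinj
    _ ≤ ∑ j ∈ Finset.range l.length, f (l.getD j d) := Finset.sum_le_sum_of_subset hsub
    _ = (l.map f).sum := by
        rw [Finset.sum_range, ← Fin.sum_univ_fun_getElem]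
        simp

namespace Ty

lemma subst1_eq_self_of_not_occurs {α : ℕ} (σ : Ty K) {t : Ty K} (h : ¬ Occurs α t) :
    subst1 α σ t = t := by
  induction t using Ty.subst.induct with
  | case1 n =>
    have hn : n ≠ α := fun e => h (e ▸ Occurs.param)
    simp only [subst1, subst, hn, if_false]
  | case2 k as ih =>
    simp only [subst1, subst] at ih ⊢
    congr 1
    conv_rhs => rw [← List.attach_map_subtype_val as]
    exact List.map_congr_left fun a _ => ih a fun hc => h (Occurs.con a.2 hc)

lemma size_con (k : K) (as : List (Ty K)) :
    (con k as).size = 1 + (as.map size).sum := by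
  rw [size]
  simp

lemma size_pos (t : Ty K) : 0 < t.size := by
  cases t with
  | param n => simp [size]
  | con k as => rw [size_con]; omega

end Ty

namespace Item

def lhsSize : Item K → ℕ
  | .ineq l _ => l.size
  | .eq _ _ => 0

lemma lhsSize_substI_of_not_occLeft {α : ℕ} (σ : Ty K) {it : Item K} (h : ¬ it.occLeft α) :
    (it.substI α σ).lhsSize = it.lhsSize := by
  cases it with
  | ineq l r => simp only [substI, lhsSize, Ty.subst1_eq_self_of_not_occurs σ h]
  | eq β τ => rfl

end Item

lemma measureS_eq_sum_lhsSize (E : List (Item K)) : measureS E = (E.map Item.lhsSize).sum := by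
  rfl

@[simp]
lemma measureS_append (E₁ E₂ : List (Item K)) :
    measureS (E₁ ++ E₂) = measureS E₁ + measureS E₂ := by
  simp [measureS_eq_sum_lhsSize]

@[simp]
lemma measureS_cons (it : Item K) (E : List (Item K)) :
    measureS (it :: E) = it.lhsSize + measureS E := by
  simp [measureS_eq_sum_lhsSize]

@[simp]
lemma measureS_nil : measureS ([] : List (Item K)) = 0 := rfl

lemma measureS_map_substI_of_not_occLeft (α : ℕ) (σ : Ty K) {E : List (Item K)}
    (h : ∀ it ∈ E, ¬ it.occLeft α) :
    measureS (E.map (Item.substI α σ)) = measureS E := by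
  simp only [measureS_eq_sum_lhsSize, List.map_map]
  congr 1
  exact List.map_congr_left fun it hit => Item.lhsSize_substI_of_not_occLeft σ (h it hit)

theorem StepS.measureS_lt {S : Sig K} {E E' : List (Item K)} (h : StepS S E E') :
    measureS E' < measureS E := by
  cases h with
  | @decomp E₁ E₂ k k' as as' hle hlen _ =>
    have hargs := List.sum_map_getD_comp_le as (.param 0) Ty.size (S.ar k') (S.iota k k')
      (fun i hi => hlen ▸ S.iota_lt hle hi) (fun i hi j hj => S.iota_inj hle hi hj)
    have hnew : measureS ((List.range (S.ar k')).map fun i =>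
        Item.ineq (as.getD (S.iota k k' i) (.param 0)) (as'.getD i (.param 0))) =
        ((List.range (S.ar k')).map fun i => (as.getD (S.iota k k' i) (.param 0)).size).sum := by
      simp only [measureS_eq_sum_lhsSize, List.map_map, Function.comp_def, Item.lhsSize]
    simp only [measureS_append, hnew, measureS_cons, measureS_nil, Item.lhsSize, Ty.size_con]
    omega
  | triv =>
    simp [Item.lhsSize, Ty.size]
  | varLeft _ _ hE =>
    rw [measureS_cons, measureS_map_substI_of_not_occLeft _ _ hE]
    simp [Item.lhsSize, Ty.size]
  | @varRight _ _ _ τ _ _ hE =>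
    rw [measureS_cons, measureS_map_substI_of_not_occLeft _ _ hE]
    simp [Item.lhsSize, τ.size_pos]

/-- each simplification rule strictly decreases the sum of the
sizes of left-hand sides of inequalities; consequently the rewriting system
terminates in at most that many steps. -/
theorem simplification_terminates (S : Sig K) :
    (∀ E E2v : List (Item K), StepS S E E2v → measureS E2v < measureS E) ∧
    (∀ (seq : ℕ → List (Item K)) (n : ℕ),
      (∀ i < n, StepS S (seq i) (seq (i + 1))) → n ≤ measureS (seq 0)) :=
  ⟨fun _ _ h => h.measureS_lt,
    fun seq n => chain_length_le_of_measure_lt (StepS S) measureS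
      (fun _ _ h => h.measureS_lt) seq n⟩
end

section
/- The system of subtype inequalities generated by the deterministic type checking algorithm (rules Func', Atom', Head', with type variables in types of program variables frozen as constants) is acyclic and left-linear. -/
/-- Terms over function symbols `F` and program variables `V`. -/
inductive Tm (F V : Type) : Type
  | var : V → Tm F V
  | app : F → List (Tm F V) → Tm F V

variable {K F V P : Type}

/-- `α` occurs in a list of subtype constraints (pairs `(lhs, rhs)` meaning `lhs ≤ rhs`). -/
def OccursC (α : ℕ) (C : List (Ty K × Ty K)) : Prop :=
  ∃ p ∈ C, Occurs α p.1 ∨ Occurs α p.2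

/-- A flat type: `K(α₁,…,αₘ)` with distinct parameters. -/
def Flat (t : Ty K) : Prop :=
  ∃ (k : K) (ns : List ℕ), t = .con k (ns.map .param) ∧ ns.Nodup

/-- Constraint generation for terms by the deterministic rule (Func'):
`Gen S fdecl U t σ C` means the type checker assigns `t` the type `σ` and posts
the system `C` of subtype inequalities.  At each node the declared type scheme
of the symbol (with flat result type) is renamed apart by a fresh injective
renaming `ρ`, and the inequalities `σᵢ ≤ τᵢρ` are posted. -/
inductive Gen (S : Sig K) (fdecl : F → List (Ty K) × Ty K) (U : V → Ty K) :
    Tm F V → Ty K → List (Ty K × Ty K) → Prop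
  | var (x : V) : Gen S fdecl U (.var x) (U x) []
  | func {f : F} {ts : List (Tm F V)} (σs : List (Ty K))
      (Cs : List (List (Ty K × Ty K))) (ρ : ℕ → ℕ) :
      Function.Injective ρ →
      Flat (fdecl f).2 →
      ts.length = (fdecl f).1.length →
      σs.length = ts.length → Cs.length = ts.length →
      (∀ i, i < ts.length →
        Gen S fdecl U (ts.getD i (.app f [])) (σs.getD i (.param 0)) (Cs.getD i [])) →
      -- freshness of the renaming w.r.t. the subderivations
      (∀ n i, i < ts.length →
        ¬ Occurs (ρ n) (σs.getD i (.param 0)) ∧ ¬ OccursC (ρ n) (Cs.getD i [])) →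
      -- the subderivations are renamed apart from each other
      (∀ i j, i < ts.length → j < ts.length → i ≠ j → ∀ α,
        (Occurs α (σs.getD i (.param 0)) ∨ OccursC α (Cs.getD i [])) →
        ¬ (Occurs α (σs.getD j (.param 0)) ∨ OccursC α (Cs.getD j []))) →
      Gen S fdecl U (.app f ts) (Ty.subst (fun n => .param (ρ n)) (fdecl f).2)
        (Cs.flatten ++
          List.zip σs ((fdecl f).1.map (Ty.subst (fun n => .param (ρ n)))))

/-- Constraint generation for an atom or clause head by rules (Atom')/(Head'):
the declared type scheme of the predicate is renamed apart and the inequalities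
`σᵢ ≤ τᵢρ` are posted on top of the constraints of the argument terms. -/
inductive GenAtom (S : Sig K) (fdecl : F → List (Ty K) × Ty K)
    (pdecl : P → List (Ty K)) (U : V → Ty K) :
    P → List (Tm F V) → List (Ty K × Ty K) → Prop
  | mk {p : P} {ts : List (Tm F V)} (t₀ : Tm F V) (σs : List (Ty K))
      (Cs : List (List (Ty K × Ty K))) (ρ : ℕ → ℕ) :
      Function.Injective ρ →
      ts.length = (pdecl p).length →
      σs.length = ts.length → Cs.length = ts.length →
      (∀ i, i < ts.length →
        Gen S fdecl U (ts.getD i t₀) (σs.getD i (.param 0)) (Cs.getD i [])) →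
      (∀ n i, i < ts.length →
        ¬ Occurs (ρ n) (σs.getD i (.param 0)) ∧ ¬ OccursC (ρ n) (Cs.getD i [])) →
      (∀ i j, i < ts.length → j < ts.length → i ≠ j → ∀ α,
        (Occurs α (σs.getD i (.param 0)) ∨ OccursC α (Cs.getD i [])) →
        ¬ (Occurs α (σs.getD j (.param 0)) ∨ OccursC α (Cs.getD j []))) →
      GenAtom S fdecl pdecl U p ts
        (Cs.flatten ++ List.zip σs ((pdecl p).map (Ty.subst (fun n => .param (ρ n)))))

/-- Number of occurrences of parameter `α` in a type. -/
def Ty.occCount (α : ℕ) : Ty K → ℕ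
  | .param n => if n = α then 1 else 0
  | .con _ as => (as.attach.map (fun a => a.1.occCount α)).sum
decreasing_by simp_wf; have := List.sizeOf_lt_of_mem a.2; omega

/-- Left-linearity: each type variable occurs at most once in the left-hand
sides of the system. -/
def LeftLinearC (C : List (Ty K × Ty K)) : Prop :=
  ∀ α, (C.map (fun p => p.1.occCount α)).sum ≤ 1

/-- Acyclicity: some ranking of type variables increases strictly from
left-hand sides to right-hand sides. -/
def AcyclicC (C : List (Ty K × Ty K)) : Prop :=
  ∃ r : ℕ → ℕ, ∀ p ∈ C, ∀ α β, Occurs α p.1 → Occurs β p.2 → r α < r β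


namespace Ty

@[elab_as_elim]
theorem induction_mem {motive : Ty K → Prop} (param : ∀ n, motive (.param n))
    (con : ∀ k as, (∀ t ∈ as, motive t) → motive (.con k as)) : ∀ t, motive t
  | .param n => param n
  | .con k as => con k as fun t _ => induction_mem param con t
decreasing_by have := List.sizeOf_lt_of_mem ‹t ∈ as›; simp_wf; omega

@[simp]
theorem subst_param (θ : ℕ → Ty K) (n : ℕ) : (param n).subst θ = θ n := by
  rw [Ty.subst]

@[simp]
theorem subst_con (θ : ℕ → Ty K) (k : K) (as : List (Ty K)) :
    (con k as).subst θ = con k (as.map (subst θ)) := by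
  rw [Ty.subst, List.attach_map_val (f := subst θ)]

@[simp]
theorem occCount_param (α n : ℕ) : (param n : Ty K).occCount α = if n = α then 1 else 0 := by
  rw [Ty.occCount]

@[simp]
theorem occCount_con (α : ℕ) (k : K) (as : List (Ty K)) :
    (con k as).occCount α = (as.map (occCount α)).sum := by
  rw [Ty.occCount, List.attach_map_val (f := occCount α)]

@[simp]
theorem occurs_param_iff {α n : ℕ} : Occurs α (param n : Ty K) ↔ α = n :=
  ⟨fun h => by cases h; rfl, fun h => h ▸ .param⟩

@[simp]
theorem occurs_con_iff {α : ℕ} {k : K} {as : List (Ty K)} :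
    Occurs α (con k as) ↔ ∃ t ∈ as, Occurs α t :=
  ⟨fun h => by cases h with | con ht ho => exact ⟨_, ht, ho⟩, fun ⟨_, ht, ho⟩ => .con ht ho⟩

theorem occCount_eq_zero_iff {α : ℕ} (t : Ty K) : t.occCount α = 0 ↔ ¬ Occurs α t := by
  induction t using induction_mem with
  | param n => simp [eq_comm]
  | con k as ih => simp +contextual [List.sum_eq_zero_iff, ih]

theorem finite_setOf_occurs (t : Ty K) : {α | Occurs α t}.Finite := by
  induction t using induction_mem with
  | param n => simp
  | con k as ih =>
    refine (as.finite_toSet.biUnion ih).subset fun α hα => ?_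
    simpa using hα

abbrev rename (ρ : ℕ → ℕ) : Ty K → Ty K :=
  subst fun n => .param (ρ n)

theorem occurs_rename {ρ : ℕ → ℕ} {β : ℕ} (t : Ty K) (h : Occurs β (t.rename ρ)) :
    β ∈ Set.range ρ := by
  induction t using induction_mem with
  | param n => exact ⟨n, by simpa [eq_comm] using h⟩
  | con k as ih =>
    obtain ⟨t, ht, ho⟩ := by simpa using h
    exact ih t ht ho

end Ty

theorem List.sum_map_le_one_of_pairwise {ι : Type*} {f : ι → ℕ} {l : List ι}
    (hf : ∀ a ∈ l, f a ≤ 1) (hl : l.Pairwise fun a b => f a ≠ 0 → f b = 0) :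
    (l.map f).sum ≤ 1 := by
  induction l with
  | nil => simp
  | cons a l ih =>
    obtain ⟨ha, hl⟩ := List.pairwise_cons.1 hl
    rw [List.map_cons, List.sum_cons]
    by_cases h0 : f a = 0
    · rw [h0, zero_add]
      exact ih (fun b hb => hf b (.tail a hb)) hl
    · rw [List.sum_eq_zero fun x hx => ?_, add_zero]
      · exact hf a (.head l)
      · obtain ⟨b, hb, rfl⟩ := List.mem_map.1 hx
        exact ha b hb h0

theorem Flat.occCount_rename_le_one {t : Ty K} {ρ : ℕ → ℕ} (ht : Flat t)
    (hρ : Function.Injective ρ) (α : ℕ) : (t.rename ρ).occCount α ≤ 1 := by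
  obtain ⟨k, ns, rfl, hns⟩ := ht
  simp only [Ty.subst_con, List.map_map, Ty.occCount_con, Function.comp_def, Ty.subst_param,
    Ty.occCount_param]
  refine List.sum_map_le_one_of_pairwise (fun n _ => by split <;> simp) (hns.imp fun hne => ?_)
  simp only [ne_eq, ite_eq_right_iff, one_ne_zero, imp_false, not_not]
  rintro rfl
  exact hρ.ne hne.symm

section Systems

variable {α : ℕ} {C D : List (Ty K × Ty K)}

def lhsCount (α : ℕ) (C : List (Ty K × Ty K)) : ℕ :=
  (C.map fun p => p.1.occCount α).sum

@[simp]
theorem lhsCount_append : lhsCount α (C ++ D) = lhsCount α C + lhsCount α D := by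
  simp [lhsCount]

theorem lhsCount_flatten (Cs : List (List (Ty K × Ty K))) :
    lhsCount α Cs.flatten = (Cs.map (lhsCount α)).sum := by
  simp only [lhsCount, List.map_flatten, List.sum_flatten, List.map_map]
  rfl

theorem lhsCount_zip_le (σs τs : List (Ty K)) :
    lhsCount α (σs.zip τs) ≤ (σs.map (Ty.occCount α)).sum := by
  induction σs generalizing τs with
  | nil => simp [lhsCount]
  | cons σ σs ih =>
    cases τs with
    | nil => simp [lhsCount]
    | cons τ τs => simpa [lhsCount] using ih τs

theorem lhsCount_eq_zero_iff : lhsCount α C = 0 ↔ ∀ p ∈ C, ¬ Occurs α p.1 := by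
  simp only [lhsCount, List.sum_eq_zero_iff, List.forall_mem_map, Ty.occCount_eq_zero_iff]

/-- `σ` is the type a premise passes on: at the parent node it becomes a left-hand side. -/
def LeftLinearWith (σ : Ty K) (C : List (Ty K × Ty K)) : Prop :=
  ∀ α, σ.occCount α + lhsCount α C ≤ 1

theorem LeftLinearWith.leftLinearC {σ : Ty K} (h : LeftLinearWith σ C) : LeftLinearC C :=
  fun α => (Nat.le_add_left _ _).trans (h α)

@[simp]
theorem occursC_flatten {Cs : List (List (Ty K × Ty K))} :
    OccursC α Cs.flatten ↔ ∃ C ∈ Cs, OccursC α C := by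
  simp only [OccursC, List.mem_flatten]
  grind

theorem finite_setOf_occursC (C : List (Ty K × Ty K)) : {α | OccursC α C}.Finite := by
  refine (C.finite_toSet.biUnion fun p _ =>
    (Ty.finite_setOf_occurs p.1).union (Ty.finite_setOf_occurs p.2)).subset ?_
  rintro α ⟨p, hp, hα⟩
  exact Set.mem_biUnion hp hα

theorem acyclicC_nil : AcyclicC ([] : List (Ty K × Ty K)) :=
  ⟨id, by simp⟩

theorem AcyclicC.append_of_disjoint (hC : AcyclicC C) (hD : AcyclicC D)
    (hCD : ∀ α, OccursC α C → ¬ OccursC α D) : AcyclicC (C ++ D) := by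
  classical
  obtain ⟨r, hr⟩ := hC
  obtain ⟨s, hs⟩ := hD
  refine ⟨fun α => if OccursC α C then r α else s α, fun p hp α β hα hβ => ?_⟩
  dsimp only
  rcases List.mem_append.1 hp with hp | hp
  · rw [if_pos ⟨p, hp, .inl hα⟩, if_pos ⟨p, hp, .inr hβ⟩]
    exact hr p hp α β hα hβ
  · rw [if_neg fun h => hCD α h ⟨p, hp, .inl hα⟩, if_neg fun h => hCD β h ⟨p, hp, .inr hβ⟩]
    exact hs p hp α β hα hβ

theorem AcyclicC.flatten {Cs : List (List (Ty K × Ty K))} (h : ∀ C ∈ Cs, AcyclicC C)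
    (hCs : Cs.Pairwise fun C D => ∀ α, OccursC α C → ¬ OccursC α D) : AcyclicC Cs.flatten := by
  induction Cs with
  | nil => exact acyclicC_nil
  | cons C Cs ih =>
    obtain ⟨hC, hCs⟩ := List.pairwise_cons.1 hCs
    refine (h C (.head Cs)).append_of_disjoint (ih (fun D hD => h D (.tail C hD)) hCs) ?_
    intro α hα hflat
    obtain ⟨D, hD, hαD⟩ := occursC_flatten.1 hflat
    exact hC D hD α hα hαD

/-- The right-hand side variables of `D` are ranked above every other variable of `C ++ D`. -/
theorem AcyclicC.append_of_fresh (hC : AcyclicC C)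
    (hD : ∀ β, (∃ p ∈ D, Occurs β p.2) → ¬ OccursC β C ∧ ∀ q ∈ D, ¬ Occurs β q.1) :
    AcyclicC (C ++ D) := by
  classical
  obtain ⟨r, hr⟩ := hC
  obtain ⟨M, hM⟩ := ((finite_setOf_occursC (C ++ D)).image r).bddAbove
  have hrM : ∀ α, OccursC α (C ++ D) → r α ≤ M := fun α hα => hM ⟨α, hα, rfl⟩
  refine ⟨fun β => if ∃ p ∈ D, Occurs β p.2 then M + 1 else r β, fun p hp α β hα hβ => ?_⟩
  dsimp only
  rcases List.mem_append.1 hp with hp | hp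
  · rw [if_neg fun h => (hD α h).1 ⟨p, hp, .inl hα⟩, if_neg fun h => (hD β h).1 ⟨p, hp, .inr hβ⟩]
    exact hr p hp α β hα hβ
  · rw [if_neg fun h => (hD α h).2 p hp hα, if_pos ⟨p, hp, hβ⟩]
    exact Nat.lt_succ_of_le (hrM α ⟨p, List.mem_append_right C hp, .inl hα⟩)

end Systems

theorem List.forall_mem_zip_of_getD {α β : Type*} {l₁ : List α} {l₂ : List β} {n : ℕ}
    {d₁ : α} {d₂ : β} {P : α → β → Prop} (h₁ : l₁.length = n) (h₂ : l₂.length = n)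
    (h : ∀ i < n, P (l₁.getD i d₁) (l₂.getD i d₂)) : ∀ p ∈ l₁.zip l₂, P p.1 p.2 := by
  intro p hp
  obtain ⟨i, hi, rfl⟩ := List.mem_iff_getElem.1 hp
  rw [List.length_zip] at hi
  have := h i (by omega)
  rw [List.getElem_zip]
  rwa [List.getD_eq_getElem _ _ (by omega), List.getD_eq_getElem _ _ (by omega)] at this

theorem List.pairwise_zip_of_getD {α β : Type*} {l₁ : List α} {l₂ : List β} {n : ℕ}
    {d₁ : α} {d₂ : β} {R : α → β → α → β → Prop} (h₁ : l₁.length = n) (h₂ : l₂.length = n)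
    (h : ∀ i j, i < n → j < n → i ≠ j →
      R (l₁.getD i d₁) (l₂.getD i d₂) (l₁.getD j d₁) (l₂.getD j d₂)) :
    (l₁.zip l₂).Pairwise fun a b => R a.1 a.2 b.1 b.2 := by
  refine List.pairwise_iff_getElem.2 fun i j hi hj hij => ?_
  rw [List.length_zip] at hi hj
  have := h i j (by omega) (by omega) hij.ne
  rw [List.getElem_zip, List.getElem_zip]
  rwa [List.getD_eq_getElem _ _ (by omega), List.getD_eq_getElem _ _ (by omega),
    List.getD_eq_getElem _ _ (by omega), List.getD_eq_getElem _ _ (by omega)] at this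

/-- Premises `(σᵢ, Cᵢ)` of a rule application, renamed apart from each other and from the
renaming `ρ` of the declared type scheme. -/
structure RenamedApart (ρ : ℕ → ℕ) (bs : List (Ty K × List (Ty K × Ty K))) : Prop where
  fresh : ∀ b ∈ bs, ∀ m, ¬ Occurs (ρ m) b.1 ∧ ¬ OccursC (ρ m) b.2
  disjoint : bs.Pairwise fun a b =>
    ∀ α, Occurs α a.1 ∨ OccursC α a.2 → ¬ (Occurs α b.1 ∨ OccursC α b.2)

/-- The system posted by (Func'), (Atom') or (Head'): the premises' systems and `σᵢ ≤ τᵢρ`. -/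
def nodeSystem (ρ : ℕ → ℕ) (bs : List (Ty K × List (Ty K × Ty K))) (τs : List (Ty K)) :
    List (Ty K × Ty K) :=
  (bs.map Prod.snd).flatten ++ (bs.map Prod.fst).zip (τs.map (Ty.rename ρ))

theorem nodeSystem_zip {ρ : ℕ → ℕ} {σs τs : List (Ty K)} {Cs : List (List (Ty K × Ty K))}
    (h : σs.length = Cs.length) :
    nodeSystem ρ (σs.zip Cs) τs = Cs.flatten ++ σs.zip (τs.map (Ty.rename ρ)) := by
  rw [nodeSystem, List.map_fst_zip h.le, List.map_snd_zip h.ge]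

theorem renamedApart_zip {n : ℕ} {ρ : ℕ → ℕ} {σs : List (Ty K)}
    {Cs : List (List (Ty K × Ty K))} (hσ : σs.length = n) (hC : Cs.length = n)
    (hfresh : ∀ m i, i < n →
      ¬ Occurs (ρ m) (σs.getD i (.param 0)) ∧ ¬ OccursC (ρ m) (Cs.getD i []))
    (hdisj : ∀ i j, i < n → j < n → i ≠ j → ∀ α,
      (Occurs α (σs.getD i (.param 0)) ∨ OccursC α (Cs.getD i [])) →
      ¬ (Occurs α (σs.getD j (.param 0)) ∨ OccursC α (Cs.getD j []))) :
    RenamedApart ρ (σs.zip Cs) where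
  fresh := List.forall_mem_zip_of_getD (P := fun σ C => ∀ m, ¬ Occurs (ρ m) σ ∧ ¬ OccursC (ρ m) C)
    hσ hC fun i hi m => hfresh m i hi
  disjoint := List.pairwise_zip_of_getD (R := fun σ C σ' C' =>
    ∀ α, Occurs α σ ∨ OccursC α C → ¬ (Occurs α σ' ∨ OccursC α C')) hσ hC hdisj

section NodeSystem

variable {ρ : ℕ → ℕ} {bs : List (Ty K × List (Ty K × Ty K))} {τs : List (Ty K)}

theorem lhsCount_nodeSystem_le (α : ℕ) :
    lhsCount α (nodeSystem ρ bs τs) ≤ (bs.map fun b => b.1.occCount α + lhsCount α b.2).sum := by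
  have hzip := lhsCount_zip_le (α := α) (bs.map Prod.fst) (τs.map (Ty.rename ρ))
  rw [List.map_map] at hzip
  rw [nodeSystem, lhsCount_append, lhsCount_flatten, List.map_map, List.sum_map_add]
  simp only [Function.comp_def] at hzip ⊢
  omega

theorem occCount_add_lhsCount_eq_zero {α : ℕ} {σ : Ty K} {C : List (Ty K × Ty K)}
    (h : ¬ (Occurs α σ ∨ OccursC α C)) : σ.occCount α + lhsCount α C = 0 := by
  rw [not_or] at h
  rw [(Ty.occCount_eq_zero_iff σ).2 h.1, lhsCount_eq_zero_iff.2 fun p hp hα => h.2 ⟨p, hp, .inl hα⟩]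

namespace RenamedApart

theorem lhsCount_nodeSystem_rename (h : RenamedApart ρ bs) (m : ℕ) :
    lhsCount (ρ m) (nodeSystem ρ bs τs) = 0 := by
  refine Nat.eq_zero_of_le_zero ((lhsCount_nodeSystem_le _).trans_eq (List.sum_eq_zero ?_))
  intro x hx
  obtain ⟨b, hb, rfl⟩ := List.mem_map.1 hx
  exact occCount_add_lhsCount_eq_zero (not_or.2 (h.fresh b hb m))

theorem leftLinearC_nodeSystem (h : RenamedApart ρ bs) (hbs : ∀ b ∈ bs, LeftLinearWith b.1 b.2) :
    LeftLinearC (nodeSystem ρ bs τs) := by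
  intro α
  refine (lhsCount_nodeSystem_le α).trans (List.sum_map_le_one_of_pairwise
    (fun b hb => hbs b hb α) (h.disjoint.imp fun hab ha => ?_))
  exact occCount_add_lhsCount_eq_zero (hab α (not_not.1 (mt occCount_add_lhsCount_eq_zero ha)))

/-- The new type is a renaming of a flat result type: its variables are distinct and fresh. -/
theorem leftLinearWith_nodeSystem (h : RenamedApart ρ bs) (hρ : Function.Injective ρ)
    {σ : Ty K} (hσ : Flat σ) (hbs : ∀ b ∈ bs, LeftLinearWith b.1 b.2) :
    LeftLinearWith (σ.rename ρ) (nodeSystem ρ bs τs) := by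
  intro α
  by_cases hα : Occurs α (σ.rename ρ)
  · obtain ⟨m, rfl⟩ := Ty.occurs_rename σ hα
    rw [h.lhsCount_nodeSystem_rename, add_zero]
    exact hσ.occCount_rename_le_one hρ _
  · rw [(Ty.occCount_eq_zero_iff _).2 hα, zero_add]
    exact h.leftLinearC_nodeSystem hbs α

theorem acyclicC_nodeSystem (h : RenamedApart ρ bs) (hbs : ∀ b ∈ bs, AcyclicC b.2) :
    AcyclicC (nodeSystem ρ bs τs) := by
  have hflat : AcyclicC (bs.map Prod.snd).flatten :=
    AcyclicC.flatten (List.forall_mem_map.2 hbs) <| List.pairwise_map.2 <|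
      h.disjoint.imp fun hab α hα hα' => hab α (.inr hα) (.inr hα')
  refine hflat.append_of_fresh ?_
  rintro β ⟨⟨σ, τ⟩, hp, hβ⟩
  obtain ⟨τ₀, -, rfl⟩ := List.mem_map.1 (List.of_mem_zip hp).2
  obtain ⟨m, rfl⟩ := Ty.occurs_rename τ₀ hβ
  refine ⟨fun hm => ?_, fun q hq hm => ?_⟩
  · obtain ⟨C, hC, hmC⟩ := occursC_flatten.1 hm
    obtain ⟨b, hb, rfl⟩ := List.mem_map.1 hC
    exact (h.fresh b hb m).2 hmC
  · obtain ⟨b, hb, hbq⟩ := List.mem_map.1 (List.of_mem_zip (b := q.2) hq).1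
    exact (h.fresh b hb m).1 (hbq ▸ hm)

end RenamedApart

end NodeSystem

section Generation

variable {S : Sig K} {fdecl : F → List (Ty K) × Ty K} {pdecl : P → List (Ty K)} {U : V → Ty K}

theorem Gen.acyclicC {t : Tm F V} {σ : Ty K} {C : List (Ty K × Ty K)}
    (h : Gen S fdecl U t σ C) : AcyclicC C := by
  induction h with
  | var x => exact acyclicC_nil
  | func σs Cs ρ _ _ _ hσ hC _ hfresh hdisj ih =>
    rw [← nodeSystem_zip (hσ.trans hC.symm)]
    exact (renamedApart_zip hσ hC hfresh hdisj).acyclicC_nodeSystem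
      (List.forall_mem_zip_of_getD (P := fun _ C => AcyclicC C) (d₁ := .param 0) hσ hC ih)

theorem Gen.leftLinearWith (hU : ∀ x α, ¬ Occurs α (U x)) {t : Tm F V} {σ : Ty K}
    {C : List (Ty K × Ty K)} (h : Gen S fdecl U t σ C) : LeftLinearWith σ C := by
  induction h with
  | var x => intro α; simp [lhsCount, (Ty.occCount_eq_zero_iff _).2 (hU x α)]
  | func σs Cs ρ hρ hflat _ hσ hC _ hfresh hdisj ih =>
    rw [← nodeSystem_zip (hσ.trans hC.symm)]
    exact (renamedApart_zip hσ hC hfresh hdisj).leftLinearWith_nodeSystem hρ hflat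
      (List.forall_mem_zip_of_getD (P := LeftLinearWith) hσ hC ih)

theorem GenAtom.acyclicC {p : P} {ts : List (Tm F V)} {C : List (Ty K × Ty K)}
    (h : GenAtom S fdecl pdecl U p ts C) : AcyclicC C := by
  obtain ⟨_, σs, Cs, ρ, -, -, hσ, hC, hgen, hfresh, hdisj⟩ := h
  rw [← nodeSystem_zip (hσ.trans hC.symm)]
  exact (renamedApart_zip hσ hC hfresh hdisj).acyclicC_nodeSystem
    (List.forall_mem_zip_of_getD (P := fun _ C => AcyclicC C) (d₁ := .param 0) hσ hC
      fun i hi => (hgen i hi).acyclicC)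

theorem GenAtom.leftLinearC (hU : ∀ x α, ¬ Occurs α (U x)) {p : P} {ts : List (Tm F V)}
    {C : List (Ty K × Ty K)} (h : GenAtom S fdecl pdecl U p ts C) : LeftLinearC C := by
  obtain ⟨_, σs, Cs, ρ, -, -, hσ, hC, hgen, hfresh, hdisj⟩ := h
  rw [← nodeSystem_zip (hσ.trans hC.symm)]
  exact (renamedApart_zip hσ hC hfresh hdisj).leftLinearC_nodeSystem
    (List.forall_mem_zip_of_getD (P := LeftLinearWith) hσ hC fun i hi =>
      (hgen i hi).leftLinearWith hU)

end Generation

/-- the system of subtype inequalities generated by the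
deterministic type checker (rules Func', Atom', Head'), with the type variables
of the types of program variables frozen as constants (here: those types are
ground), is acyclic and left-linear. -/
theorem generated_system_acyclic_leftLinear (S : Sig K)
    (fdecl : F → List (Ty K) × Ty K) (pdecl : P → List (Ty K)) (U : V → Ty K)
    (hU : ∀ (x : V) (α : ℕ), ¬ Occurs α (U x)) :
    (∀ (t : Tm F V) (σ : Ty K) (C : List (Ty K × Ty K)),
      Gen S fdecl U t σ C → LeftLinearC C ∧ AcyclicC C) ∧
    (∀ (p : P) (ts : List (Tm F V)) (C : List (Ty K × Ty K)),
      GenAtom S fdecl pdecl U p ts C → LeftLinearC C ∧ AcyclicC C) :=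
  ⟨fun _ _ _ h => ⟨(h.leftLinearWith hU).leftLinearC, h.acyclicC⟩,
    fun _ _ _ h => ⟨h.leftLinearC hU, h.acyclicC⟩⟩
end
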